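/- Let D ∈ ℝ^{n×N} be a tight frame and A ∈ ℝ^{m×n} satisfy D-RIP₁(t, δ) with t = 25s and δ = 1/5. Suppose h ∈ ℝ^n satisfies ‖Ah‖₁ = 1 and ‖D*h‖₁ ≤ (5/2)√s. Then ‖D*h‖₂ ≥ 5/12, and consequently ‖D*h‖₁ ≤ 6√s ‖D*h‖₂, i.e. h is effectively 36s-analysis-sparse. -/

import Mathlib

noncomputable def norm2 {ι : Type*} [Fintype ι] (x : ι → ℝ) : ℝ :=
  Real.sqrt (∑ i, x i ^ 2)

noncomputable def norm1 {ι : Type*} [Fintype ι] (x : ι → ℝ) : ℝ := ∑ i, |x i|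

/-!
Let `x = D*h`, `L = ‖x‖₁`, `τ = L / t`, and let `H` be the set of entries of `x` larger than `τ`;
there are at most `t` of them. The magnitudes of the other entries form a point of the polytope
`{0 ≤ w ≤ τ, ∑ w ≤ (t - #H) τ}`, whose extreme points are `(t - #H)`-sparse (the sparse
representation of Cai–Zhang, here through Krein–Milman). Restoring the entries on `H` and the
signs is affine in `w`, so the convex function `w ↦ ‖A D (…)‖₁` is bounded on the polytope by its
values at `t`-sparse vectors, where D-RIP applies. This gives
`‖Ah‖₁ ≤ (1 + δ) √(‖x‖₂² + ‖x‖₁² / t)`, and with `δ = 1/5`, `t = 25 s`, `‖x‖₁ ≤ (5/2)√s` it forces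
`‖x‖₂ ≥ 2/3`.
-/

open Finset Matrix

section Norms

variable {ι κ : Type*} [Fintype ι] [Fintype κ]

lemma norm1_nonneg (x : ι → ℝ) : 0 ≤ norm1 x :=
  sum_nonneg fun i _ => abs_nonneg (x i)

lemma norm1_eq_zero_iff {x : ι → ℝ} : norm1 x = 0 ↔ x = 0 := by
  simp [norm1, sum_eq_zero_iff_of_nonneg, funext_iff]

lemma continuous_norm1 : Continuous (norm1 : (ι → ℝ) → ℝ) := by
  unfold norm1; fun_prop

lemma convexOn_norm1 : ConvexOn ℝ Set.univ (norm1 : (ι → ℝ) → ℝ) := by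
  refine ⟨convex_univ, fun x _ y _ a b ha hb _ => ?_⟩
  simp only [norm1, smul_eq_mul, mul_sum, ← sum_add_distrib]
  refine sum_le_sum fun i _ => ?_
  calc |(a • x + b • y) i| ≤ |a * x i| + |b * y i| := abs_add_le _ _
    _ = a * |x i| + b * |y i| := by
      rw [abs_mul, abs_mul, abs_of_nonneg ha, abs_of_nonneg hb]

lemma convex_setOf_norm1_add_mulVec_le (c : κ → ℝ) (M : Matrix κ ι ℝ) (B : ℝ) :
    Convex ℝ {w | norm1 (c + M *ᵥ w) ≤ B} := by
  simpa using ((convexOn_norm1.translate_right c).comp_linearMap M.mulVecLin).convex_le B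

lemma isClosed_setOf_norm1_add_mulVec_le (c : κ → ℝ) (M : Matrix κ ι ℝ) (B : ℝ) :
    IsClosed {w | norm1 (c + M *ᵥ w) ≤ B} :=
  isClosed_le (continuous_norm1.comp (by fun_prop)) continuous_const

lemma norm2_nonneg (x : ι → ℝ) : 0 ≤ norm2 x := Real.sqrt_nonneg _

lemma norm2_sq (x : ι → ℝ) : norm2 x ^ 2 = ∑ i, x i ^ 2 :=
  Real.sq_sqrt (sum_nonneg fun i _ => sq_nonneg (x i))

lemma dotProduct_le_norm2_mul_norm2 (x y : ι → ℝ) : x ⬝ᵥ y ≤ norm2 x * norm2 y :=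
  Real.sum_mul_le_sqrt_mul_sqrt univ x y

lemma norm2_sq_eq_dotProduct (x : ι → ℝ) : norm2 x ^ 2 = x ⬝ᵥ x := by
  rw [norm2_sq]; simp only [dotProduct, sq]

end Norms

section TightFrame

variable {ι κ : Type*} [Fintype ι] [Fintype κ] [DecidableEq κ] {D : Matrix κ ι ℝ}

lemma norm2_transpose_mulVec (hD : D * Dᵀ = 1) (z : κ → ℝ) :
    norm2 (Dᵀ *ᵥ z) = norm2 z := by
  have : norm2 (Dᵀ *ᵥ z) ^ 2 = norm2 z ^ 2 := by
    rw [norm2_sq_eq_dotProduct, norm2_sq_eq_dotProduct, dotProduct_mulVec, vecMul_transpose,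
      mulVec_mulVec, hD, one_mulVec]
  exact (sq_eq_sq₀ (norm2_nonneg _) (norm2_nonneg _)).mp this

lemma norm2_mulVec_le (hD : D * Dᵀ = 1) (y : ι → ℝ) : norm2 (D *ᵥ y) ≤ norm2 y := by
  have h : norm2 (D *ᵥ y) ^ 2 ≤ norm2 (D *ᵥ y) * norm2 y :=
    calc norm2 (D *ᵥ y) ^ 2 = (Dᵀ *ᵥ (D *ᵥ y)) ⬝ᵥ y := by
          rw [norm2_sq_eq_dotProduct, dotProduct_mulVec, mulVec_transpose, dotProduct_comm]
      _ ≤ norm2 (Dᵀ *ᵥ (D *ᵥ y)) * norm2 y := dotProduct_le_norm2_mul_norm2 _ _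
      _ = norm2 (D *ᵥ y) * norm2 y := by rw [norm2_transpose_mulVec hD]
  nlinarith [norm2_nonneg (D *ᵥ y), norm2_nonneg y]

end TightFrame

section CappedSimplex

variable {ι : Type*} [Fintype ι]

def cappedSimplex (r : ℕ) (τ : ℝ) : Set (ι → ℝ) :=
  Set.Icc 0 (fun _ => τ) ∩ {w | ∑ j, w j ≤ r * τ}

lemma isCompact_cappedSimplex (r : ℕ) (τ : ℝ) : IsCompact (cappedSimplex (ι := ι) r τ) :=
  isCompact_Icc.inter_right (isClosed_le (by fun_prop) continuous_const)

lemma convex_cappedSimplex (r : ℕ) (τ : ℝ) : Convex ℝ (cappedSimplex (ι := ι) r τ) :=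
  (convex_Icc _ _).inter (convex_halfSpace_le ⟨fun _ _ => sum_add_distrib,
    fun c w => by simp [mul_sum]⟩ _)

lemma card_fractional_le_one_of_mem_extremePoints {r : ℕ} {τ : ℝ} {w : ι → ℝ}
    (hw : w ∈ (cappedSimplex r τ).extremePoints ℝ) : #{j | 0 < w j ∧ w j < τ} ≤ 1 := by
  classical
  by_contra! h
  obtain ⟨j, hj, j', hj', hne⟩ := one_lt_card.mp h
  simp only [mem_filter, mem_univ, true_and] at hj hj'
  set ε := min (min (w j) (τ - w j)) (min (w j') (τ - w j'))
  have hε : 0 < ε := by simp only [ε, lt_min_iff]; refine ⟨⟨?_, ?_⟩, ?_, ?_⟩ <;> linarith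
  have hεj : ε ≤ w j ∧ ε ≤ τ - w j ∧ ε ≤ w j' ∧ ε ≤ τ - w j' := by
    simp only [ε, min_le_iff, le_refl, true_or, or_true, and_self]
  -- two fractional coordinates leave room to move mass between them in both directions
  set e : ι → ℝ := Pi.single j ε - Pi.single j' ε
  have hmem : ∀ c : ℝ, |c| ≤ 1 → w + c • e ∈ cappedSimplex r τ := by
    intro c hc
    obtain ⟨⟨hw0, hwτ⟩, hsum⟩ := hw.1
    have hcε : |c * ε| ≤ ε := by rw [abs_mul, abs_of_pos hε]; nlinarith [abs_nonneg c]
    obtain ⟨h1, h2⟩ := abs_le.mp hcε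
    refine ⟨⟨fun i => ?_, fun i => ?_⟩, ?_⟩
    · have : 0 ≤ w i := hw0 i
      simp only [e, Pi.add_apply, Pi.smul_apply, Pi.sub_apply, Pi.single_apply, smul_eq_mul,
        Pi.zero_apply]
      split_ifs <;> subst_vars <;> linarith
    · have : w i ≤ τ := hwτ i
      simp only [e, Pi.add_apply, Pi.smul_apply, Pi.sub_apply, Pi.single_apply, smul_eq_mul]
      split_ifs <;> subst_vars <;> linarith
    · simpa [e, sum_add_distrib, mul_sub, sum_sub_distrib, ← mul_sum] using hsum
  have hseg : w ∈ openSegment ℝ (w + (1 : ℝ) • e) (w + (-1 : ℝ) • e) :=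
    ⟨1 / 2, 1 / 2, by norm_num, by norm_num, by norm_num, by ext; simp; ring⟩
  have hfix := hw.2 (hmem 1 (by simp)) (hmem (-1) (by simp)) hseg
  have : e j = 0 := by simpa using congrFun hfix j
  simp [e, hne] at this
  linarith

lemma card_support_le_of_card_fractional_le_one {r : ℕ} {τ : ℝ} {w : ι → ℝ} (hτ : 0 < τ)
    (hw : w ∈ cappedSimplex r τ) (hfrac : #{j | 0 < w j ∧ w j < τ} ≤ 1) :
    #{j | w j ≠ 0} ≤ r := by
  classical
  obtain ⟨⟨hw0, hwτ⟩, hsum⟩ := hw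
  replace hsum : ∑ j, w j ≤ r * τ := hsum
  set S := ({j | w j ≠ 0} : Finset ι)
  set P := ({j | 0 < w j ∧ w j < τ} : Finset ι)
  have hPS : P ⊆ S := fun j hj => by
    simp only [P, S, mem_filter, mem_univ, true_and] at hj ⊢; exact hj.1.ne'
  have hdefect : #S * τ - ∑ j, w j = ∑ j ∈ P, (τ - w j) := by
    rw [← sum_filter_ne_zero, sum_subset hPS fun j hjS hjP => ?_, sum_sub_distrib, sum_const,
      nsmul_eq_mul]
    simp only [S, P, mem_filter, mem_univ, true_and, not_and, not_lt] at hjS hjP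
    have : w j ≤ τ := hwτ j
    linarith [hjP (lt_of_le_of_ne (hw0 j) (Ne.symm hjS))]
  have hlt : ∑ j ∈ P, (τ - w j) < τ := by
    rcases P.eq_empty_or_nonempty with hP | ⟨j₀, hj₀⟩
    · simp [hP, hτ]
    · have hP : P = {j₀} :=
        eq_singleton_iff_unique_mem.2 ⟨hj₀, fun j hj => card_le_one.mp hfrac _ hj _ hj₀⟩
      rw [hP, sum_singleton]
      linarith [(mem_filter.mp hj₀).2.1]
  have : (#S : ℝ) * τ < (r + 1) * τ := by linarith
  have : (#S : ℝ) < r + 1 := lt_of_mul_lt_mul_right this hτ.le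
  exact_mod_cast Nat.lt_succ_iff.mp (by exact_mod_cast this)

lemma cappedSimplex_subset_of_sparse_subset {r : ℕ} {τ : ℝ} {S : Set (ι → ℝ)} (hτ : 0 < τ)
    (hS : IsClosed S) (hconv : Convex ℝ S)
    (hsparse : ∀ w ∈ cappedSimplex r τ, #{j | w j ≠ 0} ≤ r → w ∈ S) :
    cappedSimplex r τ ⊆ S := by
  rw [← closure_convexHull_extremePoints (isCompact_cappedSimplex r τ)
    (convex_cappedSimplex r τ)]
  refine closure_minimal (convexHull_min (fun w hw => hsparse w hw.1 ?_) hconv) hS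
  exact card_support_le_of_card_fractional_le_one hτ hw.1
    (card_fractional_le_one_of_mem_extremePoints hw)

end CappedSimplex

section SparseRepresentation

variable {ι κ : Type*} [Fintype ι] [DecidableEq ι] [Fintype κ]

lemma card_support_piecewise_le (H : Finset ι) (x z : ι → ℝ) :
    #{j | H.piecewise x z j ≠ 0} ≤ #H + #{j | z j ≠ 0} := by
  refine (card_le_card fun j hj => ?_).trans (card_union_le _ _)
  by_cases hjH : j ∈ H
  · exact mem_union_left _ hjH
  · simp only [mem_filter, mem_univ, true_and, piecewise_eq_of_notMem _ _ _ hjH] at hj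
    exact mem_union_right _ (by simpa using hj)

lemma sum_sq_piecewise_sign_mul_le (H : Finset ι) (x : ι → ℝ) {τ : ℝ} {w : ι → ℝ}
    (hw : w ∈ Set.Icc 0 (fun _ => τ)) :
    ∑ j, H.piecewise x (fun j => SignType.sign (x j) * w j) j ^ 2 ≤
      ∑ j, x j ^ 2 + τ * ∑ j, w j := by
  rw [mul_sum, ← sum_add_distrib]
  refine sum_le_sum fun j _ => ?_
  have hw0 : 0 ≤ w j := hw.1 j
  have hwτ : w j ≤ τ := hw.2 j
  by_cases hjH : j ∈ H
  · rw [piecewise_eq_of_mem _ _ _ hjH]; nlinarith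
  · have hσ : (SignType.sign (x j) : ℝ) ^ 2 ≤ 1 := by
      rcases lt_trichotomy (x j) 0 with h | h | h <;> simp [h]
    rw [piecewise_eq_of_notMem _ _ _ hjH, mul_pow]
    nlinarith [sq_nonneg (x j), sq_nonneg (w j)]

lemma piecewise_sign_mul_eq_add_mulVec (H : Finset ι) (x w : ι → ℝ) :
    H.piecewise x (fun j => SignType.sign (x j) * w j) =
      H.piecewise x 0 + diagonal (H.piecewise 0 fun j => (SignType.sign (x j) : ℝ)) *ᵥ w := by
  ext j
  by_cases hjH : j ∈ H <;> simp [mulVec_diagonal, hjH]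

lemma card_mul_add_sum_piecewise_le_norm1 {H : Finset ι} {x : ι → ℝ} {τ : ℝ}
    (hH : ∀ j ∈ H, τ ≤ |x j|) :
    #H * τ + ∑ j, H.piecewise (0 : ι → ℝ) (fun j => |x j|) j ≤ norm1 x := by
  calc #H * τ + ∑ j, H.piecewise (0 : ι → ℝ) (fun j => |x j|) j
      = ∑ j, ((if j ∈ H then τ else 0) + H.piecewise (0 : ι → ℝ) (fun j => |x j|) j) := by
        rw [sum_add_distrib, sum_ite_mem, univ_inter, sum_const, nsmul_eq_mul]
    _ ≤ norm1 x := sum_le_sum fun j _ => by by_cases hj : j ∈ H <;> simp [hj, hH j]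

lemma card_le_of_forall_mem_le_abs {H : Finset ι} {x : ι → ℝ} {t : ℕ} {τ : ℝ} (hτ : 0 < τ)
    (hL : norm1 x ≤ t * τ) (hH : ∀ j ∈ H, τ ≤ |x j|) : #H ≤ t := by
  have hv : 0 ≤ ∑ j, H.piecewise (0 : ι → ℝ) (fun j => |x j|) j :=
    sum_nonneg fun j _ => by by_cases hj : j ∈ H <;> simp [hj]
  have : (#H : ℝ) * τ ≤ t * τ := by linarith [card_mul_add_sum_piecewise_le_norm1 hH]
  exact_mod_cast le_of_mul_le_mul_right this hτ

lemma piecewise_abs_mem_cappedSimplex {H : Finset ι} {x : ι → ℝ} {t : ℕ} {τ : ℝ} (hτ : 0 ≤ τ)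
    (hL : norm1 x ≤ t * τ) (hH : ∀ j ∈ H, τ ≤ |x j|) (hHc : ∀ j ∉ H, |x j| ≤ τ)
    (hHt : #H ≤ t) :
    H.piecewise (0 : ι → ℝ) (fun j => |x j|) ∈ cappedSimplex (t - #H) τ := by
  refine ⟨⟨fun j => ?_, fun j => ?_⟩, ?_⟩ <;> try by_cases hj : j ∈ H
  · simp [hj]
  · simp [hj]
  · simp [hj, hτ]
  · simp [hj, hHc j hj]
  · change _ ≤ ((t - #H : ℕ) : ℝ) * τ
    rw [Nat.cast_sub hHt]
    linarith [card_mul_add_sum_piecewise_le_norm1 hH]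

lemma norm1_mulVec_piecewise_sign_mul_le (M : Matrix κ ι ℝ) {C : ℝ} (hC : 0 ≤ C) {t : ℕ}
    (hM : ∀ y : ι → ℝ, #{j | y j ≠ 0} ≤ t → norm1 (M *ᵥ y) ≤ C * norm2 y)
    {H : Finset ι} {x w : ι → ℝ} {r : ℕ} {τ b : ℝ} (hτ : 0 ≤ τ) (hw : w ∈ cappedSimplex r τ)
    (hwr : #{j | w j ≠ 0} ≤ r) (hrt : #H + r ≤ t) (hrb : r * τ ≤ b) :
    norm1 (M *ᵥ H.piecewise x (fun j => SignType.sign (x j) * w j)) ≤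
      C * √(norm2 x ^ 2 + τ * b) := by
  refine (hM _ ?_).trans (mul_le_mul_of_nonneg_left (Real.sqrt_le_sqrt ?_) hC)
  · have : #{j | (SignType.sign (x j) : ℝ) * w j ≠ 0} ≤ #{j | w j ≠ 0} :=
      card_le_card fun j hj => by simp_all
    have := card_support_piecewise_le H x fun j => (SignType.sign (x j) : ℝ) * w j
    omega
  · have hw_sum : ∑ j, w j ≤ r * τ := hw.2
    calc _ ≤ ∑ j, x j ^ 2 + τ * ∑ j, w j := sum_sq_piecewise_sign_mul_le H x hw.1
      _ ≤ norm2 x ^ 2 + τ * b := by rw [norm2_sq]; gcongr; linarith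

theorem norm1_mulVec_le_of_sparse (M : Matrix κ ι ℝ) {C : ℝ} (hC : 0 ≤ C) {t : ℕ} (ht : 0 < t)
    (hM : ∀ y : ι → ℝ, #{j | y j ≠ 0} ≤ t → norm1 (M *ᵥ y) ≤ C * norm2 y) (x : ι → ℝ) :
    norm1 (M *ᵥ x) ≤ C * √(norm2 x ^ 2 + norm1 x ^ 2 / t) := by
  rcases (norm1_nonneg x).eq_or_lt with hL | hL
  · rw [eq_comm, norm1_eq_zero_iff] at hL
    subst hL
    simp only [mulVec_zero, norm1, Pi.zero_apply, abs_zero, sum_const_zero]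
    positivity
  set τ := norm1 x / t
  have hτ : 0 < τ := by positivity
  have hLt : norm1 x = t * τ := by simp only [τ]; field_simp
  set H : Finset ι := {j | τ < |x j|}
  have hH : ∀ j ∈ H, τ ≤ |x j| := fun j hj => (mem_filter.mp hj).2.le
  have hHc : ∀ j ∉ H, |x j| ≤ τ := fun j hj => by simpa [H] using hj
  have hHt : #H ≤ t := card_le_of_forall_mem_le_abs hτ hLt.le hH
  set B := C * √(norm2 x ^ 2 + τ * norm1 x)
  set y := H.piecewise x 0
  set P := diagonal (H.piecewise (0 : ι → ℝ) fun j => (SignType.sign (x j) : ℝ))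
  have hsparse : ∀ w ∈ cappedSimplex (t - #H) τ, #{j | w j ≠ 0} ≤ t - #H →
      w ∈ {w | norm1 (M *ᵥ y + (M * P) *ᵥ w) ≤ B} := fun w hw hwr => by
    change norm1 (M *ᵥ y + (M * P) *ᵥ w) ≤ B
    rw [← mulVec_mulVec, ← mulVec_add, ← piecewise_sign_mul_eq_add_mulVec]
    refine norm1_mulVec_piecewise_sign_mul_le M hC hM hτ.le hw hwr (by omega) ?_
    rw [Nat.cast_sub hHt, hLt]
    nlinarith [(#H).cast_nonneg (α := ℝ)]
  have hx := cappedSimplex_subset_of_sparse_subset hτ (isClosed_setOf_norm1_add_mulVec_le _ _ _)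
    (convex_setOf_norm1_add_mulVec_le _ _ _) hsparse
    (piecewise_abs_mem_cappedSimplex hτ.le hLt.le hH hHc hHt)
  change norm1 (M *ᵥ y + (M * P) *ᵥ _) ≤ B at hx
  rw [← mulVec_mulVec, ← mulVec_add, ← piecewise_sign_mul_eq_add_mulVec] at hx
  convert hx using 3
  · ext j; by_cases hj : j ∈ H <;> simp [hj]
  · simp only [τ]; ring

end SparseRepresentation

/-- If A satisfies D-RIP₁(25s, 1/5) and h satisfies ‖Ah‖₁ = 1 and ‖D*h‖₁ ≤ (5/2)√s,
then ‖D*h‖₂ ≥ 5/12 and hence ‖D*h‖₁ ≤ 6√s‖D*h‖₂ (h is effectively 36s-analysis-sparse). -/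
theorem stmt5 (m n N s : ℕ)
    (D : Matrix (Fin n) (Fin N) ℝ) (hD : D * D.transpose = 1)
    (A : Matrix (Fin m) (Fin n) ℝ)
    (hRIP : ∀ x : Fin N → ℝ, (Finset.univ.filter fun j => x j ≠ 0).card ≤ 25 * s →
      (1 - 1/5) * norm2 (D.mulVec x) ≤ norm1 (A.mulVec (D.mulVec x)) ∧
      norm1 (A.mulVec (D.mulVec x)) ≤ (1 + 1/5) * norm2 (D.mulVec x))
    (h : Fin n → ℝ)
    (hA1 : norm1 (A.mulVec h) = 1)
    (hDh : norm1 (D.transpose.mulVec h) ≤ (5 / 2) * Real.sqrt s) :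
    5 / 12 ≤ norm2 (D.transpose.mulVec h) ∧
    norm1 (D.transpose.mulVec h) ≤ 6 * Real.sqrt s * norm2 (D.transpose.mulVec h) := by
  set x := Dᵀ *ᵥ h
  have hh : D *ᵥ x = h := by rw [mulVec_mulVec, hD, one_mulVec]
  have hs : s ≠ 0 := by
    rintro rfl
    have : x = 0 := norm1_eq_zero_iff.mp (le_antisymm (by simpa using hDh) (norm1_nonneg x))
    simp [← hh, this, norm1] at hA1
  have hAD : ∀ y : Fin N → ℝ, #{j | y j ≠ 0} ≤ 25 * s →
      norm1 ((A * D) *ᵥ y) ≤ 6 / 5 * norm2 y := fun y hy =>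
    calc norm1 ((A * D) *ᵥ y) ≤ (1 + 1 / 5) * norm2 (D *ᵥ y) := by
          rw [← mulVec_mulVec]; exact (hRIP y hy).2
      _ ≤ 6 / 5 * norm2 y := by norm_num [norm2_mulVec_le hD y]
  have hAh := norm1_mulVec_le_of_sparse (A * D) (by norm_num) (by omega : 0 < 25 * s) hAD x
  rw [← mulVec_mulVec, hh, hA1] at hAh
  have hL : norm1 x ^ 2 / (25 * s : ℕ) ≤ 1 / 4 := by
    have : norm1 x ^ 2 ≤ 25 / 4 * s :=
      calc norm1 x ^ 2 ≤ (5 / 2 * √s) ^ 2 := pow_le_pow_left₀ (norm1_nonneg x) hDh 2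
        _ = 25 / 4 * s := by rw [mul_pow, Real.sq_sqrt (Nat.cast_nonneg s)]; norm_num
    rw [div_le_iff₀ (by positivity)]
    push_cast
    linarith
  have hx : 2 / 3 ≤ norm2 x := by
    have : 5 / 6 ≤ √(norm2 x ^ 2 + norm1 x ^ 2 / (25 * s : ℕ)) := by linarith
    rw [Real.le_sqrt' (by norm_num)] at this
    nlinarith [norm2_nonneg x]
  refine ⟨by linarith, ?_⟩
  nlinarith [Real.sqrt_nonneg s]
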